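/- Let G = ⟨a, t | [a,t,t] = 1, [a,t,a,a,a] = 1⟩ and let w = [a,t,a,a,t,a]. Then for every element c of the commutator subgroup [G,G] and every integer n ≥ 2, the element [a,t,a,a,t,c] lies in the subgroup [⟨w⟩^G, G]·γ_n(G), where ⟨w⟩^G is the normal closure of w in G. -/

import Mathlib

open scoped commutatorElement

/-- The left-normed iterated commutator `[x, y₁, …, yₖ]`. -/
def leftComm {G : Type*} [Group G] (x : G) (l : List G) : G :=
  l.foldl (fun p q => ⁅p, q⁆) x

/-- The relator `[a,t,t]`, where `a, t` are the generators of the free group on `Fin 2`. -/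
def relATT : FreeGroup (Fin 2) :=
  leftComm (FreeGroup.of 0) [FreeGroup.of 1, FreeGroup.of 1]

/-- The relator `[a,t,a,a,a]`. -/
def relATAAA : FreeGroup (Fin 2) :=
  leftComm (FreeGroup.of 0) [FreeGroup.of 1, FreeGroup.of 0, FreeGroup.of 0, FreeGroup.of 0]

/-- The group `G = ⟨a, t | [a,t,t] = 1, [a,t,a,a,a] = 1⟩`. -/
abbrev DGroup : Type := PresentedGroup ({relATT, relATAAA} : Set (FreeGroup (Fin 2)))

/-- The generator `a` of `DGroup`. -/
def aD : DGroup := PresentedGroup.of 0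

/-- The generator `t` of `DGroup`. -/
def tD : DGroup := PresentedGroup.of 1

/-- The element `w = [a,t,a,a,t,a]` of `DGroup`. -/
def wD : DGroup := leftComm aD [tD, aD, aD, tD, aD]

/-!
Put `b = [a,t]`, `u = [a,t,a,a,t]` and `w = [u,a]`. We induct on `n`, working in `G/M` with
`M = [⟨w⟩^G, G]·γ_{n+1}(G)`. There `w` is central, and so are `[u,b]` and `[u,[a,t,a,a]]`, which
by the induction hypothesis lie in `[⟨w⟩^G, G]·γ_n(G)`. With the relators, the Hall–Witt identity
for `[a,t,a,a], t, b` gives `[u,b] = 1`; computing the conjugate of `[a,t,a,a]` by `t` in two ways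
then gives `[a,t,a,b] = [u,[a,t,a,a]]·u`, which `t` centralises, so `[u,t] = 1`. Hence `u` lies
in the second centre of `G/M`, a group generated by `a` and `t`, and by the three subgroup lemma
the second centre commutes with the derived subgroup.
-/

section General

open Subgroup

variable {G : Type*} [Group G]

theorem map_leftComm {H : Type*} [Group H] (f : G →* H) (x : G) (l : List G) :
    f (leftComm x l) = leftComm (f x) (l.map f) := by
  induction l generalizing x with
  | nil => rfl
  | cons y l ih => exact (ih ⁅x, y⁆).trans (by rw [map_commutatorElement]; rfl)

theorem mul_mul_inv_eq_of_mem_center {z : G} (hz : z ∈ center G) (g : G) : g * z * g⁻¹ = z :=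
  Commute.mul_inv_cancel (mem_center_iff.mp hz g)

theorem inv_mul_mul_eq_of_mem_center {z : G} (hz : z ∈ center G) (g : G) : g⁻¹ * z * g = z :=
  Commute.inv_mul_cancel (mem_center_iff.mp hz g)

theorem commutatorElement_eq_one_of_mem_center {z : G} (hz : z ∈ center G) (g : G) : ⁅z, g⁆ = 1 :=
  commutatorElement_eq_one_iff_commute.mpr (mem_center_iff.mp hz g).symm

theorem commutatorElement_commutatorElement_eq_of_commute {a t x : G} (hxa : Commute x a) :
    ⁅x, ⁅a, t⁆⁆ = ⁅⁅x, t⁆, a⁆⁻¹ * ⁅⁅x, t⁆, ⁅a, t⁆⁆ := by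
  have h : a * ⁅x, t⁆ * a⁻¹ = ⁅a * x * a⁻¹, a * t * a⁻¹⁆ := by group
  rw [hxa.symm.mul_inv_cancel] at h
  calc ⁅x, ⁅a, t⁆⁆ = ⁅x, a * t * a⁻¹⁆ * (⁅a, t⁆ * ⁅x, t⁆⁻¹ * ⁅a, t⁆⁻¹) := by group
    _ = a * ⁅x, t⁆ * a⁻¹ * (⁅a, t⁆ * ⁅x, t⁆⁻¹ * ⁅a, t⁆⁻¹) := by rw [h]
    _ = ⁅⁅x, t⁆, a⁆⁻¹ * ⁅⁅x, t⁆, ⁅a, t⁆⁆ := by group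

theorem commutatorElement_commutatorElement_eq_one_of_mem_center {a t x : G}
    (hbt : Commute ⁅a, t⁆ t) (hxa : Commute x a) (hw : ⁅⁅x, t⁆, a⁆ ∈ center G)
    (hz : ⁅⁅x, t⁆, ⁅a, t⁆⁆ ∈ center G) :
    ⁅⁅x, t⁆, ⁅a, t⁆⁆ = 1 := by
  have hbx : ⁅⁅a, t⁆, x⁆ ∈ center G := by
    rw [← commutatorElement_inv, commutatorElement_commutatorElement_eq_of_commute hxa]
    exact inv_mem (mul_mem (inv_mem hw) hz)
  -- Hall–Witt for `x, t, [a,t]`: its last two factors are trivial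
  simpa [hbt.symm.mul_inv_cancel, commutatorElement_eq_one_iff_commute.mpr hbt.symm,
    commutatorElement_eq_one_of_mem_center hbx] using
    commutatorElement_commutatorElement_conj_mul x t ⁅a, t⁆

theorem conj_commutatorElement_of_commute {a t : G} (hbt : Commute ⁅a, t⁆ t) :
    t * ⁅⁅a, t⁆, a⁆ * t⁻¹ = ⁅a, t⁆⁻¹ * ⁅⁅a, t⁆, a⁆ * ⁅a, t⁆ := by
  calc t * ⁅⁅a, t⁆, a⁆ * t⁻¹ = ⁅t * ⁅a, t⁆ * t⁻¹, t * a * t⁻¹⁆ := by group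
    _ = _ := by rw [hbt.symm.mul_inv_cancel]; group

theorem commutatorElement_eq_mul_of_conj_eq {a t y : G}
    (hty : t * y * t⁻¹ = ⁅a, t⁆⁻¹ * y * ⁅a, t⁆) (hxa : Commute ⁅y, a⁆ a)
    (hub : Commute ⁅⁅y, a⁆, t⁆ ⁅a, t⁆) (hw : ⁅⁅⁅y, a⁆, t⁆, a⁆ ∈ center G)
    (hz : ⁅⁅⁅y, a⁆, t⁆, ⁅y, a⁆⁆ ∈ center G) :
    ⁅y, ⁅a, t⁆⁆ = ⁅⁅⁅y, a⁆, t⁆, ⁅y, a⁆⁆ * ⁅⁅y, a⁆, t⁆ := by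
  have hxb : ⁅⁅y, a⁆, ⁅a, t⁆⁆ = ⁅⁅⁅y, a⁆, t⁆, a⁆⁻¹ := by
    rw [commutatorElement_commutatorElement_eq_of_commute hxa,
      commutatorElement_eq_one_iff_commute.mpr hub, mul_one]
  have hta : t * a * t⁻¹ = ⁅a, t⁆⁻¹ * a := by group
  generalize ⁅a, t⁆ = b at *
  generalize hx : ⁅y, a⁆ = x at *
  generalize hu : ⁅x, t⁆ = u at *
  have htx : t * x * t⁻¹ = b⁻¹ * x * b * ((b⁻¹ * a * b⁻¹) * ⁅y, b⁆⁻¹ * (b⁻¹ * a * b⁻¹)⁻¹) :=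
    calc t * x * t⁻¹ = ⁅t * y * t⁻¹, t * a * t⁻¹⁆ := by rw [← hx]; group
      _ = ⁅b⁻¹ * y * b, b⁻¹ * a⁆ := by rw [hty, hta]
      _ = _ := by rw [← hx]; group
  have htx' : t * x * t⁻¹ = u⁻¹ * x := by rw [← hu]; group
  have hbx : b⁻¹ * x * b = ⁅u, a⁆⁻¹ * x := by
    rw [show b⁻¹ * x * b = b⁻¹ * ⁅x, b⁆ * b * x by group, hxb,
      inv_mul_mul_eq_of_mem_center (inv_mem hw)]
  have hye : (b⁻¹ * a * b⁻¹) * ⁅y, b⁆⁻¹ * (b⁻¹ * a * b⁻¹)⁻¹ = ⁅u, a⁆ * (⁅u, x⁆ * u)⁻¹ :=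
    calc _ = (b⁻¹ * x * b)⁻¹ * (t * x * t⁻¹) := by rw [htx]; group
      _ = (x⁻¹ * ⁅u, a⁆ * x) * (x⁻¹ * ⁅u, x⁆ * x * u)⁻¹ := by rw [hbx, htx']; group
      _ = _ := by rw [inv_mul_mul_eq_of_mem_center hw, inv_mul_mul_eq_of_mem_center hz]
  have hgu : (b⁻¹ * a * b⁻¹)⁻¹ * u * (b⁻¹ * a * b⁻¹) = u * ⁅u, a⁆ :=
    calc _ = b * a⁻¹ * (b * u * b⁻¹) * a * b⁻¹ := by group
      _ = b * (u * ((u * a)⁻¹ * ⁅u, a⁆ * (u * a))) * b⁻¹ := by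
        rw [hub.symm.mul_inv_cancel]; group
      _ = b * u * b⁻¹ * (b * ⁅u, a⁆ * b⁻¹) := by rw [inv_mul_mul_eq_of_mem_center hw]; group
      _ = _ := by rw [hub.symm.mul_inv_cancel, mul_mul_inv_eq_of_mem_center hw]
  calc ⁅y, b⁆ = (b⁻¹ * a * b⁻¹)⁻¹ * ((b⁻¹ * a * b⁻¹) * ⁅y, b⁆⁻¹ * (b⁻¹ * a * b⁻¹)⁻¹)⁻¹ *
        (b⁻¹ * a * b⁻¹) := by group
    _ = ((b⁻¹ * a * b⁻¹)⁻¹ * ⁅u, x⁆ * (b⁻¹ * a * b⁻¹)) *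
        ((b⁻¹ * a * b⁻¹)⁻¹ * u * (b⁻¹ * a * b⁻¹)) *
        ((b⁻¹ * a * b⁻¹)⁻¹ * ⁅u, a⁆⁻¹ * (b⁻¹ * a * b⁻¹)) := by rw [hye]; group
    _ = ⁅u, x⁆ * u := by
      rw [hgu, inv_mul_mul_eq_of_mem_center hz, inv_mul_mul_eq_of_mem_center (inv_mem hw)]
      group

theorem leftComm_eq_one_of_mem_center {a t : G} (h1 : leftComm a [t, t] = 1)
    (h2 : leftComm a [t, a, a, a] = 1) (hw : leftComm a [t, a, a, t, a] ∈ center G)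
    (hb : leftComm a [t, a, a, t, ⁅a, t⁆] ∈ center G)
    (hx : leftComm a [t, a, a, t, leftComm a [t, a, a]] ∈ center G) :
    leftComm a [t, a, a, t, t] = 1 := by
  simp only [leftComm, List.foldl_cons, List.foldl_nil] at *
  have hbt : Commute ⁅a, t⁆ t := commutatorElement_eq_one_iff_commute.mp h1
  have hxa : Commute ⁅⁅⁅a, t⁆, a⁆, a⁆ a := commutatorElement_eq_one_iff_commute.mp h2
  have hub := commutatorElement_eq_one_iff_commute.mp
    (commutatorElement_commutatorElement_eq_one_of_mem_center hbt hxa hw hb)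
  have hty := conj_commutatorElement_of_commute hbt
  have he := commutatorElement_eq_mul_of_conj_eq hty hxa hub hw hx
  generalize ⁅a, t⁆ = b at *
  generalize ⁅b, a⁆ = y at *
  generalize ⁅⁅y, a⁆, t⁆ = u at *
  set z := ⁅u, ⁅y, a⁆⁆
  have htu : t * u * t⁻¹ = u :=
    calc t * u * t⁻¹ = (t * z * t⁻¹)⁻¹ * (t * ⁅y, b⁆ * t⁻¹) := by rw [he]; group
      _ = z⁻¹ * ⁅t * y * t⁻¹, t * b * t⁻¹⁆ := by rw [mul_mul_inv_eq_of_mem_center hx]; group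
      _ = z⁻¹ * (b⁻¹ * ⁅y, b⁆ * b) := by rw [hty, hbt.symm.mul_inv_cancel]; group
      _ = z⁻¹ * ((b⁻¹ * z * b) * (b⁻¹ * u * b)) := by rw [he]; group
      _ = u := by rw [inv_mul_mul_eq_of_mem_center hx, hub.symm.inv_mul_cancel]; group
  exact commutatorElement_eq_one_iff_commute.mpr (mul_inv_eq_iff_eq_mul.mp htu).symm

theorem commutatorElement_mem_of_closure_eq_top {N : Subgroup G} [N.Normal] {s : Set G}
    (hs : closure s = ⊤) {u : G} (hu : ∀ x ∈ s, ⁅u, x⁆ ∈ N) (g : G) : ⁅u, g⁆ ∈ N := by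
  induction (hs ▸ mem_top g : g ∈ closure s) using closure_induction with
  | mem x hx => exact hu x hx
  | one => simp
  | mul x y _ _ hx hy =>
    rw [show ⁅u, x * y⁆ = ⁅u, x⁆ * (x * ⁅u, y⁆ * x⁻¹) by group]
    exact mul_mem hx (Normal.conj_mem inferInstance _ hy x)
  | inv x _ hx =>
    rw [show ⁅u, x⁻¹⁆ = x⁻¹ * ⁅u, x⁆⁻¹ * x⁻¹⁻¹ by group]
    exact Normal.conj_mem inferInstance _ (inv_mem hx) x⁻¹

theorem commutator_commutator_upperCentralSeries_two_eq_bot :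
    ⁅commutator G, Subgroup.upperCentralSeries G 2⁆ = ⊥ := by
  have h : ⁅⁅Subgroup.upperCentralSeries G 2, (⊤ : Subgroup G)⁆, (⊤ : Subgroup G)⁆ = ⊥ := by
    rw [commutator_top_right_eq_bot_iff_le_center, ← Subgroup.upperCentralSeries_one]
    exact Subgroup.commutator_upperCentralSeries_top_le G 1
  rw [commutator_def]
  exact commutator_commutator_eq_bot_of_rotate (by rwa [commutator_comm ⊤]) h

theorem commutatorElement_eq_one_of_mem_commutator {s : Set G} (hs : closure s = ⊤) {u : G}
    (hu : ∀ x ∈ s, ⁅u, x⁆ ∈ center G) {c : G} (hc : c ∈ commutator G) : ⁅u, c⁆ = 1 := by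
  have hu₂ : u ∈ Subgroup.upperCentralSeries G 2 := by
    rw [← Subgroup.upperCentralSeries_one] at hu
    exact Subgroup.mem_upperCentralSeries_succ_iff.mpr
      (commutatorElement_mem_of_closure_eq_top hs hu)
  have h := commutator_commutator_upperCentralSeries_two_eq_bot (G := G) ▸
    commutator_mem_commutator hc hu₂
  rw [mem_bot, ← commutatorElement_inv, inv_eq_one] at h
  exact h

theorem leftComm_eq_one_of_mem_commutator {a t : G} (hgen : closure {a, t} = ⊤)
    (h1 : leftComm a [t, t] = 1) (h2 : leftComm a [t, a, a, a] = 1)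
    (hw : leftComm a [t, a, a, t, a] ∈ center G)
    (hb : leftComm a [t, a, a, t, ⁅a, t⁆] ∈ center G)
    (hx : leftComm a [t, a, a, t, leftComm a [t, a, a]] ∈ center G) {c : G}
    (hc : c ∈ commutator G) : leftComm a [t, a, a, t, c] = 1 := by
  refine commutatorElement_eq_one_of_mem_commutator hgen ?_ hc
  rintro x (hxa | hxt)
  · rw [hxa]; exact hw
  · rw [Set.mem_singleton_iff.mp hxt]
    change leftComm a [t, a, a, t, t] ∈ center G
    rw [leftComm_eq_one_of_mem_center h1 h2 hw hb hx]
    exact one_mem _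

theorem sup_lowerCentralSeries_le_upperCentralSeriesStep (K : Subgroup G) [K.Normal] (n : ℕ) :
    K ⊔ (⊤ : Subgroup G).lowerCentralSeries n ≤
      (K ⊔ (⊤ : Subgroup G).lowerCentralSeries (n + 1)).upperCentralSeriesStep :=
  sup_le
    (fun _ hx y => mem_sup_left (commutator_le_left K ⊤ (commutator_mem_commutator hx (mem_top y))))
    (fun _ hx y => mem_sup_right (commutator_mem_commutator hx (mem_top y)))

theorem leftComm_mem_sup_lowerCentralSeries {a t : G} (hgen : closure {a, t} = ⊤)
    (h1 : leftComm a [t, t] = 1) (h2 : leftComm a [t, a, a, a] = 1) {K : Subgroup G} [K.Normal]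
    (hw : leftComm a [t, a, a, t, a] ∈ K.upperCentralSeriesStep) (n : ℕ) {c : G}
    (hc : c ∈ commutator G) :
    leftComm a [t, a, a, t, c] ∈ K ⊔ (⊤ : Subgroup G).lowerCentralSeries n := by
  induction n generalizing c with
  | zero => exact mem_sup_right (mem_top _)
  | succ n ih =>
    set M := K ⊔ (⊤ : Subgroup G).lowerCentralSeries (n + 1)
    set π := QuotientGroup.mk' M
    have hcen {x : G} (hx : x ∈ M.upperCentralSeriesStep) : π x ∈ center (G ⧸ M) := by
      rwa [Subgroup.upperCentralSeriesStep_eq_comap_center] at hx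
    have hih {d : G} (hd : d ∈ commutator G) : π (leftComm a [t, a, a, t, d]) ∈ center (G ⧸ M) :=
      hcen (sup_lowerCentralSeries_le_upperCentralSeriesStep K n (ih hd))
    have hcomm (x y : G) : ⁅x, y⁆ ∈ commutator G :=
      commutator_mem_commutator (mem_top x) (mem_top y)
    refine (QuotientGroup.eq_one_iff _).mp (?_ : π _ = 1)
    simp only [map_leftComm, List.map_cons, List.map_nil]
    refine leftComm_eq_one_of_mem_commutator ?_ ?_ ?_ ?_ ?_ ?_ ?_
    · rw [← Set.image_pair, ← MonoidHom.map_closure, hgen, ← MonoidHom.range_eq_map]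
      exact MonoidHom.range_eq_top.mpr (QuotientGroup.mk'_surjective M)
    · simpa only [map_leftComm, List.map_cons, List.map_nil, map_one] using congrArg π h1
    · simpa only [map_leftComm, List.map_cons, List.map_nil, map_one] using congrArg π h2
    · simpa only [map_leftComm, List.map_cons, List.map_nil] using
        hcen fun g => mem_sup_left (hw g)
    · simpa only [map_leftComm, List.map_cons, List.map_nil, map_commutatorElement] using
        hih (hcomm a t)
    · have hd : leftComm a [t, a, a] ∈ commutator G := hcomm _ _
      simpa only [map_leftComm, List.map_cons, List.map_nil] using hih hd
    · have hc' := mem_map_of_mem π hc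
      rw [_root_.commutator_def, map_commutator] at hc'
      exact commutator_mono le_top le_top hc'

end General

theorem closure_aD_tD : Subgroup.closure ({aD, tD} : Set DGroup) = ⊤ := by
  rw [← PresentedGroup.closure_range_of]
  congr 1
  ext x
  simp [Fin.exists_fin_two, aD, tD, eq_comm]

theorem leftComm_aD_tD_tD : leftComm aD [tD, tD] = 1 :=
  (map_leftComm (PresentedGroup.mk _) (FreeGroup.of 0) [FreeGroup.of 1, FreeGroup.of 1]).symm.trans
    (PresentedGroup.one_of_mem (Set.mem_insert _ _))

theorem leftComm_aD_tD_aD_aD_aD : leftComm aD [tD, aD, aD, aD] = 1 :=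
  (map_leftComm (PresentedGroup.mk _) (FreeGroup.of 0)
    [FreeGroup.of 1, FreeGroup.of 0, FreeGroup.of 0, FreeGroup.of 0]).symm.trans
    (PresentedGroup.one_of_mem (Set.mem_insert_of_mem _ rfl))

-- `lowerCentralSeries (n - 1)` is `γ_n(G)`.
theorem lemma7_general (c : DGroup) (hc : c ∈ commutator DGroup) (n : ℕ) :
    leftComm aD [tD, aD, aD, tD, c] ∈
      ⁅Subgroup.normalClosure {wD}, (⊤ : Subgroup DGroup)⁆ ⊔
        (⊤ : Subgroup DGroup).lowerCentralSeries (n - 1) := by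
  have hw : wD ∈ (⁅Subgroup.normalClosure {wD}, ⊤⁆ : Subgroup DGroup).upperCentralSeriesStep :=
    fun g => Subgroup.commutator_mem_commutator (Subgroup.subset_normalClosure rfl)
      (Subgroup.mem_top g)
  exact leftComm_mem_sup_lowerCentralSeries closure_aD_tD leftComm_aD_tD_tD
    leftComm_aD_tD_aD_aD_aD hw (n - 1) hc

/-- Lemma 7: for every `c ∈ [G,G]` and every `n ≥ 2`, the element `[a,t,a,a,t,c]` lies
in `[⟨w⟩^G, G]·γ_n(G)`.  (Here `γ_n(G) = lowerCentralSeries G (n-1)`.) -/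
theorem lemma7 (c : DGroup) (hc : c ∈ commutator DGroup) (n : ℕ) (hn : 2 ≤ n) :
    leftComm aD [tD, aD, aD, tD, c] ∈
      ⁅Subgroup.normalClosure {wD}, (⊤ : Subgroup DGroup)⁆ ⊔
        (⊤ : Subgroup DGroup).lowerCentralSeries (n - 1) :=
  lemma7_general c hc n
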